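/- arXiv:0809.3656 — 2 statements merged into one kernel-verified Lean document; each statement's English description precedes it below -/
import Mathlib

section
/- Let n ≥ 1 be an integer and p a prime number with p ≡ 1 (mod n). Then the polynomial Q(S) = Sⁿ − (pⁿ + T) is irreducible over the fraction field Frac(ℤ_p[[T]]) of the ring of formal power series over the p-adic integers. -/
/-!
Put `t = -pⁿ`, an element of the maximal ideal of `ℤ_p`, so that `pⁿ + T = T - t`. Weierstrass
division gives `ℤ_p⟦T⟧ ⧸ (T - t) ≅ ℤ_p[T] ⧸ (T - t) ≅ ℤ_p`, so `T - t` is prime. Localizing the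
Noetherian domain `ℤ_p⟦T⟧` at this principal prime yields a discrete valuation ring with
uniformizer `T - t`, over which `Sⁿ - (T - t)` is Eisenstein; since a DVR is integrally closed,
Gauss's lemma carries irreducibility over to the common fraction field.
-/

open Polynomial

theorem PowerSeries.prime_X_sub_C {A : Type*} [CommRing A] [IsDomain A] {I : Ideal A}
    [IsAdicComplete I A] {t : A} (ht : t ∈ I) :
    Prime (PowerSeries.X - PowerSeries.C t : PowerSeries A) := by
  have hdist : (Polynomial.X - Polynomial.C t).IsDistinguishedAt I :=
    { mem := fun hi => by
        rw [natDegree_X_sub_C, Nat.lt_one_iff] at hi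
        simpa [hi] using I.neg_mem ht
      monic := monic_X_sub_C t }
  have hcoe : ((Polynomial.X - Polynomial.C t : A[X]) : PowerSeries A) =
      PowerSeries.X - PowerSeries.C t := by
    simp
  have hne : ((Polynomial.X - Polynomial.C t : A[X]) : PowerSeries A) ≠ 0 :=
    Polynomial.coe_eq_zero_iff.not.mpr (X_sub_C_ne_zero t)
  rw [← hcoe, ← Ideal.span_singleton_prime hne, ← Ideal.Quotient.isDomain_iff_prime]
  exact (hdist.algEquivQuotient.symm.trans (quotientSpanXSubCAlgEquiv t)).toMulEquiv.isDomain

namespace Localization.AtPrime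

variable {R : Type*} [CommRing R] {f : R} [(Ideal.span {f}).IsPrime]

theorem span_algebraMap_eq_maximalIdeal :
    Ideal.span {algebraMap R (Localization.AtPrime (Ideal.span {f})) f} =
      IsLocalRing.maximalIdeal (Localization.AtPrime (Ideal.span {f})) := by
  rw [← map_eq_maximalIdeal, Ideal.map_span, Set.image_singleton]

theorem prime_algebraMap [IsDomain R] (hf : f ≠ 0) :
    Prime (algebraMap R (Localization.AtPrime (Ideal.span {f})) f) := by
  have hinj : Function.Injective (algebraMap R (Localization.AtPrime (Ideal.span {f}))) :=
    IsLocalization.injective _ (Ideal.span {f}).primeCompl_le_nonZeroDivisors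
  rw [← Ideal.span_singleton_prime ((map_ne_zero_iff _ hinj).mpr hf),
    span_algebraMap_eq_maximalIdeal]
  exact (IsLocalRing.maximalIdeal.isMaximal _).isPrime

theorem isDiscreteValuationRing [IsDomain R] [IsNoetherianRing R] (hf : f ≠ 0) :
    IsDiscreteValuationRing (Localization.AtPrime (Ideal.span {f})) := by
  have hnf : ¬IsField (Localization.AtPrime (Ideal.span {f})) := by
    rw [IsLocalRing.isField_iff_maximalIdeal_eq, ← span_algebraMap_eq_maximalIdeal,
      Ideal.span_singleton_eq_bot]
    exact (prime_algebraMap hf).ne_zero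
  refine ((IsDiscreteValuationRing.TFAE _ hnf).out 0 4).mpr ?_
  rw [← span_algebraMap_eq_maximalIdeal]
  exact ⟨_, rfl⟩

end Localization.AtPrime

theorem Polynomial.irreducible_X_pow_sub_C_of_prime {D : Type*} [CommRing D] [IsDomain D]
    {ϖ : D} (hϖ : Prime ϖ) {n : ℕ} (hn : n ≠ 0) : Irreducible (X ^ n - C ϖ) := by
  have hmonic : (X ^ n - C ϖ).Monic := monic_X_pow_sub_C ϖ hn
  have hP : (Ideal.span {ϖ}).IsPrime := (Ideal.span_singleton_prime hϖ.ne_zero).mpr hϖ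
  refine IsEisensteinAt.irreducible (𝓟 := Ideal.span {ϖ}) ?_ hP hmonic.isPrimitive
    (by rw [natDegree_X_pow_sub_C]; omega)
  refine hmonic.isEisensteinAt_of_mem_of_notMem hP.ne_top (fun {i} hi => ?_) ?_
  · rw [natDegree_X_pow_sub_C] at hi
    rw [coeff_sub, coeff_X_pow, coeff_C, if_neg hi.ne]
    split_ifs <;> simp
  · rw [coeff_sub, coeff_X_pow, coeff_C, if_neg (Ne.symm hn), if_pos rfl, zero_sub,
      Ideal.neg_mem_iff, Ideal.span_singleton_pow, Ideal.mem_span_singleton]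
    simpa using (pow_dvd_pow_iff hϖ.ne_zero hϖ.not_isUnit (m := 1) (n := 2)).not

theorem Polynomial.irreducible_X_pow_sub_algebraMap_of_prime {D K : Type*} [CommRing D]
    [IsDomain D] [IsIntegrallyClosed D] [Field K] [Algebra D K] [IsFractionRing D K]
    {ϖ : D} (hϖ : Prime ϖ) {n : ℕ} (hn : n ≠ 0) :
    Irreducible (X ^ n - C (algebraMap D K ϖ)) := by
  simpa using ((monic_X_pow_sub_C ϖ hn).irreducible_iff_irreducible_map_fraction_map
    (K := K)).mp (irreducible_X_pow_sub_C_of_prime hϖ hn)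

theorem pow_sub_p_pow_add_X_irreducible_general (n : ℕ) (hn : 1 ≤ n) (p : ℕ) [Fact p.Prime] :
    Irreducible
      (Polynomial.X ^ n -
        Polynomial.C (algebraMap (PowerSeries ℤ_[p]) (FractionRing (PowerSeries ℤ_[p]))
          ((p : PowerSeries ℤ_[p]) ^ n + PowerSeries.X))) := by
  set t : ℤ_[p] := -(p : ℤ_[p]) ^ n
  have ht : t ∈ IsLocalRing.maximalIdeal ℤ_[p] := by
    rw [PadicInt.maximalIdeal_eq_span_p, Ideal.mem_span_singleton]
    exact (dvd_pow_self _ (by omega)).neg_right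
  have hX : (p : PowerSeries ℤ_[p]) ^ n + PowerSeries.X = PowerSeries.X - PowerSeries.C t := by
    simp [t, map_natCast, add_comm]
  have hprime := PowerSeries.prime_X_sub_C ht
  have := (Ideal.span_singleton_prime hprime.ne_zero).mpr hprime
  have := Localization.AtPrime.isDiscreteValuationRing hprime.ne_zero
  rw [hX, IsScalarTower.algebraMap_apply _
    (Localization.AtPrime (Ideal.span {PowerSeries.X - PowerSeries.C t})) _]
  exact irreducible_X_pow_sub_algebraMap_of_prime
    (Localization.AtPrime.prime_algebraMap hprime.ne_zero) (by omega)

/-- If `n ≥ 1` and `p` is a prime with `p ≡ 1 (mod n)`, the polynomial `Sⁿ − (pⁿ + T)` is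
irreducible over the fraction field `Frac(ℤ_p[[T]])` of the ring of formal power series over
the `p`-adic integers. -/
theorem pow_sub_p_pow_add_X_irreducible (n : ℕ) (hn : 1 ≤ n) (p : ℕ) [Fact p.Prime]
    (hp : p ≡ 1 [MOD n]) :
    Irreducible
      (Polynomial.X ^ n -
        Polynomial.C (algebraMap (PowerSeries ℤ_[p]) (FractionRing (PowerSeries ℤ_[p]))
          ((p : PowerSeries ℤ_[p]) ^ n + PowerSeries.X))) :=
  pow_sub_p_pow_add_X_irreducible_general n hn p
end

section
/- Let K be a number field with ring of integers A and let r > 1 be a real number. If f = ∑_{n≥0} a_n Tⁿ ∈ A[[T]] is a power series such that for every ring embedding σ : K → ℂ the complex power series ∑_{n≥0} σ(a_n) Tⁿ has radius of convergence at least r (equivalently, for every s ∈ [0,r), |σ(a_n)| sⁿ → 0 as n → ∞), then f is a polynomial: a_n = 0 for all sufficiently large n. In other words, A_{r⁻}[[T]] = A[T] for every r > 1. -/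
open Filter Topology NumberField

/-!
A nonzero algebraic integer has a conjugate of absolute value at least `1`, since the product of
its conjugates is a nonzero rational integer. Convergence of every `σ(f)` at `T = 1` makes all
conjugates of `aₙ` eventually smaller than `1`, and there are only finitely many embeddings.
-/

namespace NumberField.RingOfIntegers

variable {K : Type*} [Field K] [NumberField K]

theorem eq_zero_of_forall_norm_embedding_lt_one {a : 𝓞 K}
    (h : ∀ σ : K →+* ℂ, ‖σ a‖ < 1) : a = 0 := by
  by_contra ha
  obtain ⟨w⟩ : Nonempty (InfinitePlace K) := inferInstance
  have hw : 1 ≤ w a := InfinitePlace.one_le_of_lt_one ha fun z _ ↦ by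
    simpa only [InfinitePlace.norm_embedding_eq] using h z.embedding
  rw [← w.norm_embedding_eq] at hw
  exact (h w.embedding).not_ge hw

theorem eventually_eq_zero_of_tendsto_norm_embedding {a : ℕ → 𝓞 K}
    (h : ∀ σ : K →+* ℂ, Tendsto (fun n ↦ ‖σ (a n)‖) atTop (𝓝 0)) :
    ∀ᶠ n in atTop, a n = 0 := by
  have hsmall : ∀ᶠ n in atTop, ∀ σ : K →+* ℂ, ‖σ (a n)‖ < 1 :=
    eventually_all.2 fun σ ↦ (h σ).eventually (eventually_lt_nhds one_pos)
  exact hsmall.mono fun _ ↦ eq_zero_of_forall_norm_embedding_lt_one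

end NumberField.RingOfIntegers

/-- Let `K` be a number field with ring of integers `A` and `r > 1` a real number. Any power
series `f ∈ A[[T]]` such that, for every embedding `σ : K → ℂ`, the complex series `σ(f)` has
radius of convergence at least `r` (i.e. `|σ(aₙ)| sⁿ → 0` for all `0 ≤ s < r`) is a
polynomial: its coefficients vanish for all sufficiently large `n`. -/
theorem powerSeries_radius_gt_one_is_polynomial (K : Type) [Field K] [NumberField K]
    (r : ℝ) (hr : 1 < r) (f : PowerSeries (𝓞 K))
    (hf : ∀ σ : K →+* ℂ, ∀ s : ℝ, 0 ≤ s → s < r →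
      Tendsto (fun n : ℕ =>
        ‖σ (algebraMap (𝓞 K) K (PowerSeries.coeff n f))‖ * s ^ n)
        atTop (nhds 0)) :
    ∃ N : ℕ, ∀ n : ℕ, N ≤ n → PowerSeries.coeff n f = 0 := by
  have hcoeff : ∀ σ : K →+* ℂ,
      Tendsto (fun n ↦ ‖σ (algebraMap (𝓞 K) K (PowerSeries.coeff n f))‖) atTop (𝓝 0) :=
    fun σ ↦ by simpa only [one_pow, mul_one] using hf σ 1 zero_le_one hr
  exact
    (RingOfIntegers.eventually_eq_zero_of_tendsto_norm_embedding hcoeff).exists_forall_of_atTop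
end
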